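/- Let f be a continuous self-map of the Cantor space such that for every m ∈ ℕ there is a partition of mesh < 1/m each of whose components in Γ(f,·) is a balloon. Then f has no Li–Yorke pair: for all σ, τ, if liminf_{n→∞} d(fⁿ(σ),fⁿ(τ)) = 0 then lim_{n→∞} d(fⁿ(σ),fⁿ(τ)) = 0. -/

import Mathlib

/-!
Fine balloon partitions force every block to be mapped by `f` into a single block, hence by every
iterate `f^[n]` into a single block. If `d(fⁿσ, fⁿτ)` is small enough at one time `n₀`, then by a
Lebesgue number argument for the clopen cover `P` the points `f^[n₀] σ` and `f^[n₀] τ` lie in a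
common block, and from then on they stay in a common block, so their distance is at most the mesh.
-/

noncomputable def cantorDist (σ τ : ℕ → Bool) : ℝ :=
  letI := Classical.propDecidable (∃ n, σ n ≠ τ n)
  if h : ∃ n, σ n ≠ τ n then 1 / (Nat.find h + 1) else 0

def IsPartition (P : Finset (Set (ℕ → Bool))) : Prop :=
  (∀ a ∈ P, IsClopen a ∧ a.Nonempty) ∧
  (∀ a ∈ P, ∀ b ∈ P, a ≠ b → Disjoint a b) ∧
  ⋃₀ (P : Set (Set (ℕ → Bool))) = Set.univ

noncomputable def cantorDiam (A : Set (ℕ → Bool)) : ℝ :=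
  sSup {r | ∃ σ ∈ A, ∃ τ ∈ A, r = cantorDist σ τ}

noncomputable def mesh (C : Set (Set (ℕ → Bool))) : ℝ :=
  sSup (cantorDiam '' C)

def gammaEdge (f : (ℕ → Bool) → (ℕ → Bool)) (a b : Set (ℕ → Bool)) : Prop :=
  (f '' a ∩ b).Nonempty

def balloonEdge (s m : ℕ) (a b : Fin (s + m)) : Prop :=
  b.val = a.val + 1 ∨ (a.val = s + m - 1 ∧ b.val = s)

def dumbbellEdge (r s t : ℕ) (a b : Fin (r + s + t)) : Prop :=
  (b.val = a.val + 1 ∧ a.val + 1 ≠ r) ∨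
  (a.val = r - 1 ∧ b.val = 0) ∨
  (a.val = 0 ∧ b.val = r) ∨
  (a.val = r + s + t - 1 ∧ b.val = r + s)

/-- Every component of `Γ(f,P)` is a balloon. -/
def AllComponentsBalloons (f : (ℕ → Bool) → (ℕ → Bool))
    (P : Finset (Set (ℕ → Bool))) : Prop :=
  ∃ (k : ℕ) (s t : Fin k → ℕ), (∀ i, 0 < s i) ∧ (∀ i, 0 < t i) ∧
    ∃ e : {a // a ∈ P} ≃ (Σ i : Fin k, Fin (s i + t i)),
      ∀ a b : {a // a ∈ P}, gammaEdge f a.val b.val ↔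
        ∃ heq : (e a).1 = (e b).1,
          balloonEdge (s (e b).1) (t (e b).1)
            (Fin.cast (by rw [heq]) (e a).2) (e b).2

open Set Filter PiNat

lemma cantorDist_nonneg (x y : ℕ → Bool) : 0 ≤ cantorDist x y := by
  unfold cantorDist
  split <;> positivity

lemma cantorDist_le_one (x y : ℕ → Bool) : cantorDist x y ≤ 1 := by
  unfold cantorDist
  split
  · rw [div_le_one (by positivity)]
    exact le_add_of_nonneg_left (Nat.cast_nonneg _)
  · exact zero_le_one

lemma mem_cylinder_of_cantorDist_lt {x y : ℕ → Bool} {n : ℕ} (h : cantorDist x y < 1 / n) :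
    y ∈ cylinder x n := by
  rcases n.eq_zero_or_pos with rfl | hn
  · simp [cylinder_zero]
  refine mem_cylinder_iff.2 fun i hi => ?_
  unfold cantorDist at h
  split at h
  case isTrue hdiff =>
    rw [one_div_lt_one_div (by positivity) (by exact_mod_cast hn)] at h
    have hle : n < Nat.find hdiff + 1 := by exact_mod_cast h
    have hlt : i < Nat.find hdiff := by omega
    exact (not_not.1 (Nat.find_min hdiff hlt)).symm
  case isFalse hsame =>
    by_contra hne
    exact hsame ⟨i, Ne.symm hne⟩

lemma cantorDist_le_cantorDiam {A : Set (ℕ → Bool)} {x y : ℕ → Bool} (hx : x ∈ A)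
    (hy : y ∈ A) : cantorDist x y ≤ cantorDiam A :=
  le_csSup ⟨1, by rintro r ⟨σ, -, τ, -, rfl⟩; exact cantorDist_le_one σ τ⟩ ⟨x, hx, y, hy, rfl⟩

lemma cantorDiam_le_one (A : Set (ℕ → Bool)) : cantorDiam A ≤ 1 :=
  Real.sSup_le (by rintro r ⟨σ, -, τ, -, rfl⟩; exact cantorDist_le_one σ τ) zero_le_one

lemma cantorDiam_le_mesh {C : Set (Set (ℕ → Bool))} {A : Set (ℕ → Bool)} (hA : A ∈ C) :
    cantorDiam A ≤ mesh C :=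
  le_csSup ⟨1, by rintro r ⟨B, -, rfl⟩; exact cantorDiam_le_one B⟩ ⟨A, hA, rfl⟩

lemma eventually_forall_exists_cylinder_subset {E : ℕ → Type*} [∀ n, TopologicalSpace (E n)]
    [∀ n, DiscreteTopology (E n)] [∀ n, CompactSpace (E n)] {P : Set (Set (∀ n, E n))}
    (hopen : ∀ a ∈ P, IsOpen a) (hcover : ⋃₀ P = univ) :
    ∀ᶠ N in atTop, ∀ x, ∃ a ∈ P, cylinder x N ⊆ a := by
  have hlocal : ∀ x, ∃ n, ∃ a ∈ P, cylinder x n ⊆ a := by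
    intro x
    obtain ⟨a, haP, hxa⟩ : x ∈ ⋃₀ P := hcover ▸ mem_univ x
    obtain ⟨-, ⟨y, n, rfl⟩, hxy, hsub⟩ :=
      (isTopologicalBasis_cylinders E).exists_subset_of_mem_open hxa (hopen a haP)
    exact ⟨n, a, haP, mem_cylinder_iff_eq.1 hxy ▸ hsub⟩
  choose n a haP hsub using hlocal
  obtain ⟨t, -, ht⟩ := isCompact_univ.elim_nhds_subcover (fun x => cylinder x (n x))
    fun x _ => (isOpen_cylinder E x (n x)).mem_nhds (self_mem_cylinder x (n x))
  filter_upwards [eventually_ge_atTop (t.sup n)] with N hN z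
  obtain ⟨x, hxt, hzx⟩ := mem_iUnion₂.1 (ht (mem_univ z))
  refine ⟨a x, haP x, ?_⟩
  calc cylinder z N ⊆ cylinder z (n x) := cylinder_anti z ((Finset.le_sup hxt).trans hN)
    _ = cylinder x (n x) := mem_cylinder_iff_eq.1 hzx
    _ ⊆ a x := hsub x

lemma exists_mapsTo_iterate {α : Type*} {f : α → α} {P : Set (Set α)}
    (h : ∀ a ∈ P, ∃ b ∈ P, MapsTo f a b) (n : ℕ) : ∀ a ∈ P, ∃ b ∈ P, MapsTo f^[n] a b := by
  induction n with
  | zero => exact fun a ha => ⟨a, ha, mapsTo_id a⟩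
  | succ n ih =>
    intro a ha
    obtain ⟨b, hb, hab⟩ := h a ha
    obtain ⟨c, hc, hbc⟩ := ih b hb
    exact ⟨c, hc, Function.iterate_succ f n ▸ hbc.comp hab⟩

/-- The wrap-around edge starts at the last vertex, the only one without a successor `a + 1`. -/
lemma balloonEdge_unique {s m : ℕ} {a b c : Fin (s + m)}
    (hb : balloonEdge s m a b) (hc : balloonEdge s m a c) : b = c := by
  unfold balloonEdge at hb hc
  ext
  omega

lemma sigma_balloonEdge_unique {k : ℕ} {s t : Fin k → ℕ}
    {x y z : Σ i : Fin k, Fin (s i + t i)}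
    (hy : ∃ h : x.1 = y.1, balloonEdge (s y.1) (t y.1) (Fin.cast (by rw [h]) x.2) y.2)
    (hz : ∃ h : x.1 = z.1, balloonEdge (s z.1) (t z.1) (Fin.cast (by rw [h]) x.2) z.2) :
    y = z := by
  obtain ⟨i, x⟩ := x
  obtain ⟨_, y⟩ := y
  obtain ⟨_, z⟩ := z
  obtain ⟨hxy, hy⟩ := hy
  obtain ⟨hxz, hz⟩ := hz
  dsimp only at hxy hxz hy hz
  subst hxy hxz
  rw [balloonEdge_unique hy hz]

namespace AllComponentsBalloons

variable {f : (ℕ → Bool) → (ℕ → Bool)} {P : Finset (Set (ℕ → Bool))}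

lemma eq_of_gammaEdge (h : AllComponentsBalloons f P) {a b c : Set (ℕ → Bool)}
    (ha : a ∈ P) (hb : b ∈ P) (hc : c ∈ P) (hab : gammaEdge f a b) (hac : gammaEdge f a c) :
    b = c := by
  obtain ⟨k, s, t, -, -, e, hedge⟩ := h
  have := e.injective <| sigma_balloonEdge_unique
    ((hedge ⟨a, ha⟩ ⟨b, hb⟩).1 hab) ((hedge ⟨a, ha⟩ ⟨c, hc⟩).1 hac)
  exact congrArg Subtype.val this

lemma exists_mapsTo (h : AllComponentsBalloons f P) (hP : IsPartition P) :
    ∀ a ∈ (P : Set (Set (ℕ → Bool))), ∃ b ∈ (P : Set (Set (ℕ → Bool))), MapsTo f a b := by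
  obtain ⟨hne, -, hcover⟩ := hP
  have hblock : ∀ x, ∃ b ∈ P, x ∈ b := fun x => by
    obtain ⟨b, hb, hxb⟩ : x ∈ ⋃₀ (P : Set (Set (ℕ → Bool))) := hcover ▸ mem_univ x
    exact ⟨b, hb, hxb⟩
  intro a ha
  obtain ⟨x, hx⟩ := (hne a ha).2
  obtain ⟨b, hb, hfx⟩ := hblock (f x)
  refine ⟨b, hb, fun y hy => ?_⟩
  obtain ⟨c, hc, hfy⟩ := hblock (f y)
  rwa [h.eq_of_gammaEdge ha hb hc ⟨f x, mem_image_of_mem f hx, hfx⟩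
    ⟨f y, mem_image_of_mem f hy, hfy⟩]

end AllComponentsBalloons

theorem no_LiYorke_pair_cont_general (f : (ℕ → Bool) → (ℕ → Bool))
    (hyp : ∀ m : ℕ, 0 < m → ∃ P : Finset (Set (ℕ → Bool)), IsPartition P ∧
      mesh (↑P : Set (Set (ℕ → Bool))) < 1 / (m : ℝ) ∧ AllComponentsBalloons f P) :
    ∀ σ τ : ℕ → Bool,
      Filter.liminf (fun n => cantorDist (f^[n] σ) (f^[n] τ)) Filter.atTop = 0 →
      Filter.Tendsto (fun n => cantorDist (f^[n] σ) (f^[n] τ)) Filter.atTop (nhds 0) := by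
  intro σ τ hlim
  refine tendsto_order.2 ⟨fun r hr => .of_forall fun n => hr.trans_le (cantorDist_nonneg _ _),
    fun ε hε => ?_⟩
  obtain ⟨m, hm⟩ := exists_nat_one_div_lt hε
  obtain ⟨P, hP, hmesh, hball⟩ := hyp (m + 1) m.succ_pos
  obtain ⟨N, hN, hNpos⟩ := ((eventually_forall_exists_cylinder_subset
    (fun a ha => (hP.1 a ha).1.isOpen) hP.2.2).and (eventually_gt_atTop 0)).exists
  have hbdd : IsBoundedUnder (· ≤ ·) atTop fun n => cantorDist (f^[n] σ) (f^[n] τ) :=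
    isBoundedUnder_of ⟨1, fun n => cantorDist_le_one _ _⟩
  obtain ⟨n₀, hn₀⟩ : ∃ n, cantorDist (f^[n] σ) (f^[n] τ) < 1 / N :=
    (frequently_lt_of_liminf_lt hbdd.isCoboundedUnder_ge (by rw [hlim]; positivity)).exists
  obtain ⟨a, haP, hcyl⟩ := hN (f^[n₀] σ)
  have hσ : f^[n₀] σ ∈ a := hcyl (self_mem_cylinder _ N)
  have hτ : f^[n₀] τ ∈ a := hcyl (mem_cylinder_of_cantorDist_lt hn₀)
  filter_upwards [eventually_ge_atTop n₀] with n hn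
  obtain ⟨b, hbP, hab⟩ := exists_mapsTo_iterate (hball.exists_mapsTo hP) (n - n₀) a haP
  have hiter : ∀ x, f^[n] x = f^[n - n₀] (f^[n₀] x) := fun x => by
    rw [← Function.iterate_add_apply, Nat.sub_add_cancel hn]
  calc cantorDist (f^[n] σ) (f^[n] τ)
      ≤ cantorDiam b := by
        rw [hiter, hiter]
        exact cantorDist_le_cantorDiam (hab hσ) (hab hτ)
    _ ≤ mesh (↑P : Set (Set (ℕ → Bool))) := cantorDiam_le_mesh hbP
    _ < 1 / ((m + 1 : ℕ) : ℝ) := hmesh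
    _ < ε := by exact_mod_cast hm

theorem no_LiYorke_pair_cont (f : (ℕ → Bool) → (ℕ → Bool)) (hf : Continuous f)
    (hyp : ∀ m : ℕ, 0 < m → ∃ P : Finset (Set (ℕ → Bool)), IsPartition P ∧
      mesh (↑P : Set (Set (ℕ → Bool))) < 1 / (m : ℝ) ∧ AllComponentsBalloons f P) :
    ∀ σ τ : ℕ → Bool,
      Filter.liminf (fun n => cantorDist (f^[n] σ) (f^[n] τ)) Filter.atTop = 0 →
      Filter.Tendsto (fun n => cantorDist (f^[n] σ) (f^[n] τ)) Filter.atTop (nhds 0) :=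
  no_LiYorke_pair_cont_general f hyp
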